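/- Let α be an irrational number not equivalent to (1+√5)/2 and not equivalent to (1+√17)/2. If in its continued fraction expansion aₙ ≤ 4 for all sufficiently large n and aₙ = 2 for infinitely many n, then 𝔨(α) ≤ √2 − 1/2. -/

import Mathlib

open Filter

/-- The tails `αₙ = [aₙ; aₙ₊₁, …]` of the continued fraction of `α`. -/
noncomputable def cfTail (α : ℝ) : ℕ → ℝ
  | 0 => α
  | n + 1 => (Int.fract (cfTail α n))⁻¹

/-- The partial quotients `aₙ` of the continued fraction of `α`. -/
noncomputable def cfDigit (α : ℝ) (n : ℕ) : ℤ := ⌊cfTail α n⌋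

/-- Value `[a; b, c, …]` of a finite continued fraction given by a list. -/
noncomputable def finCF : List ℤ → ℝ
  | [] => 0
  | a :: l => (a : ℝ) + (finCF l)⁻¹

/-- `α*ₙ = [0; aₙ, aₙ₋₁, …, a₁]`. -/
noncomputable def cfStar (α : ℝ) (n : ℕ) : ℝ :=
  (finCF (((List.range' 1 n).reverse).map (cfDigit α)))⁻¹

/-- Numerators `pₙ` of the convergents of `α`. -/
noncomputable def cfNum (α : ℝ) : ℕ → ℤ
  | 0 => cfDigit α 0
  | 1 => cfDigit α 1 * cfDigit α 0 + 1
  | n + 2 => cfDigit α (n + 2) * cfNum α (n + 1) + cfNum α n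

/-- Denominators `qₙ` of the convergents of `α`. -/
noncomputable def cfDen (α : ℝ) : ℕ → ℤ
  | 0 => 1
  | 1 => cfDigit α 1
  | n + 2 => cfDigit α (n + 2) * cfDen α (n + 1) + cfDen α n

/-- The irrationality measure function `ψ_α^[2]` for "second best" approximations. -/
noncomputable def psi2 (α : ℝ) (t : ℝ) : ℝ :=
  sInf { x : ℝ | ∃ p q : ℤ, 1 ≤ q ∧ (q : ℝ) ≤ t ∧
    (∀ n : ℕ, (p, q) ≠ (cfNum α n, cfDen α n)) ∧ x = |(q : ℝ) * α - (p : ℝ)| }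

/-- The Diophantine constant `𝔨(α) = liminf_{t → ∞} t · ψ_α^[2](t)`. -/
noncomputable def kConst (α : ℝ) : ℝ := liminf (fun t : ℝ => t * psi2 α t) atTop

/-- Two numbers are equivalent if the tails of their continued fraction expansions
coincide: `a_{n+k} = b_{m+k}` for all `k ≥ 1`, for some positive integers `m`, `n`. -/
def CFEquiv (α β : ℝ) : Prop :=
  ∃ n m : ℕ, 0 < n ∧ 0 < m ∧ ∀ k : ℕ, 0 < k → cfDigit α (n + k) = cfDigit β (m + k)

/-- The spectrum `𝕃₂` of values of `𝔨`. -/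
def L2 : Set ℝ := { l : ℝ | ∃ α : ℝ, Irrational α ∧ l = kConst α }

/-- `κ¹ₙ(α) = (1 + α*ₙ₋₁)(αₙ − 1)/(αₙ + α*ₙ₋₁)`. -/
noncomputable def kappa1 (α : ℝ) (n : ℕ) : ℝ :=
  (1 + cfStar α (n - 1)) * (cfTail α n - 1) / (cfTail α n + cfStar α (n - 1))

/-- `κ²ₙ(α) = (1 − α*ₙ)(αₙ₊₁ + 1)/(αₙ₊₁ + α*ₙ)`. -/
noncomputable def kappa2 (α : ℝ) (n : ℕ) : ℝ :=
  (1 - cfStar α n) * (cfTail α (n + 1) + 1) / (cfTail α (n + 1) + cfStar α n)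

/-- `κ⁴ₙ(α) = 4/(αₙ + α*ₙ₋₁)`. -/
noncomputable def kappa4 (α : ℝ) (n : ℕ) : ℝ :=
  4 / (cfTail α n + cfStar α (n - 1))

/-!
Whenever `a_{n+4} = 2`, some fraction that is not a convergent approximates `α` well. With
`Q = q_{n+3}`, `R = q_{n+2}` and `u = 1/α_{n+5}`, the mediant `(p_{n+3} + p_{n+2})/(Q + R)` has
quality `q |qα - p| = (Q + R)(1 + u)/(2Q + R + Qu)`. Since `a_{n+2} ≤ 4` forces `R ≤ 5Q/6`, this
is at most `99/109` when `u ≤ 4/5` (guaranteed by `a_{n+6} ≤ 3`) or `u ≤ 1/2` (guaranteed by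
`a_{n+5} ≥ 2`). In the remaining case `a_{n+5} = 1`, `a_{n+6} = 4`, the doubled convergent
`2p_{n+5}/2q_{n+5}` has quality at most `4q_{n+5}/q_{n+6} ≤ 8/9`. Finally `99/109 < √2 - 1/2`.
-/

section ContinuedFraction

variable {α : ℝ}

theorem cfTail_succ (n : ℕ) : cfTail α (n + 1) = (Int.fract (cfTail α n))⁻¹ := rfl

theorem irrational_cfTail (hα : Irrational α) : ∀ n, Irrational (cfTail α n)
  | 0 => hα
  | n + 1 => ((irrational_cfTail hα n).sub_intCast ⌊cfTail α n⌋).inv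

theorem one_lt_cfTail_succ (hα : Irrational α) (n : ℕ) : 1 < cfTail α (n + 1) :=
  (one_lt_inv₀ (Int.fract_pos.mpr ((irrational_cfTail hα n).ne_int _))).mpr (Int.fract_lt_one _)

theorem cfTail_eq_cfDigit_add_inv (n : ℕ) :
    cfTail α n = cfDigit α n + (cfTail α (n + 1))⁻¹ := by
  rw [cfTail_succ, inv_inv, cfDigit, Int.floor_add_fract]

theorem cfDigit_le_cfTail (n : ℕ) : (cfDigit α n : ℝ) ≤ cfTail α n := Int.floor_le _

theorem cfTail_lt_cfDigit_add_one (n : ℕ) : cfTail α n < cfDigit α n + 1 :=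
  Int.lt_floor_add_one _

theorem one_le_cfDigit_succ (hα : Irrational α) (n : ℕ) : 1 ≤ cfDigit α (n + 1) :=
  Int.le_floor.mpr (by exact_mod_cast (one_lt_cfTail_succ hα n).le)

theorem cfNum_add_two (n : ℕ) :
    cfNum α (n + 2) = cfDigit α (n + 2) * cfNum α (n + 1) + cfNum α n := rfl

theorem cfDen_add_two (n : ℕ) :
    cfDen α (n + 2) = cfDigit α (n + 2) * cfDen α (n + 1) + cfDen α n := rfl

theorem one_le_cfDen (hα : Irrational α) : ∀ n, 1 ≤ cfDen α n
  | 0 => le_rfl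
  | 1 => one_le_cfDigit_succ hα 0
  | n + 2 => by
    have := one_le_cfDen hα n
    have := one_le_cfDen hα (n + 1)
    have := one_le_cfDigit_succ hα (n + 1)
    rw [cfDen_add_two]
    nlinarith

theorem cfDen_le_succ (hα : Irrational α) : ∀ n, cfDen α n ≤ cfDen α (n + 1)
  | 0 => one_le_cfDigit_succ hα 0
  | n + 1 => by
    have := one_le_cfDen hα n
    have := one_le_cfDen hα (n + 1)
    have := one_le_cfDigit_succ hα (n + 1)
    rw [cfDen_add_two]
    nlinarith

theorem cfDen_mono (hα : Irrational α) : Monotone (cfDen α) :=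
  monotone_nat_of_le_succ (cfDen_le_succ hα)

theorem cfDen_succ_lt (hα : Irrational α) (n : ℕ) : cfDen α (n + 1) < cfDen α (n + 2) := by
  have := one_le_cfDen hα n
  have := one_le_cfDen hα (n + 1)
  have : 1 ≤ cfDigit α (n + 2) := one_le_cfDigit_succ hα (n + 1)
  rw [cfDen_add_two]
  nlinarith

theorem le_cfDen (hα : Irrational α) : ∀ n : ℕ, (n : ℤ) ≤ cfDen α n
  | 0 => zero_le_one
  | 1 => one_le_cfDen hα 1
  | n + 2 => by
    have := le_cfDen hα (n + 1)
    have := cfDen_succ_lt hα n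
    push_cast at *
    omega

theorem cfNum_succ_mul_cfDen_sub (n : ℕ) :
    cfNum α (n + 1) * cfDen α n - cfNum α n * cfDen α (n + 1) = (-1) ^ n := by
  induction n with
  | zero => simp only [cfNum, cfDen]; ring
  | succ n ih => rw [cfNum_add_two, cfDen_add_two, pow_succ, ← ih]; ring

def IsConvergent (α : ℝ) (p q : ℤ) : Prop := ∃ n, (p, q) = (cfNum α n, cfDen α n)

theorem not_isConvergent_of_cfDen_lt_of_lt_cfDen (hα : Irrational α) {n : ℕ} {p q : ℤ}
    (hlo : cfDen α n < q) (hhi : q < cfDen α (n + 1)) : ¬ IsConvergent α p q := by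
  rintro ⟨m, hm⟩
  obtain rfl : q = cfDen α m := congrArg Prod.snd hm
  rcases le_or_gt m n with hmn | hmn
  · exact (cfDen_mono hα hmn).not_gt hlo
  · exact (cfDen_mono hα hmn).not_gt hhi

theorem not_isConvergent_mul (m : ℕ) {d : ℤ} (hd : 1 < d) :
    ¬ IsConvergent α (d * cfNum α m) (d * cfDen α m) := by
  rintro ⟨n, hn⟩
  obtain ⟨hp, hq⟩ := Prod.mk.inj hn
  have hdvd : d ∣ (-1) ^ n := by
    rw [← cfNum_succ_mul_cfDen_sub (α := α), ← hp, ← hq]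
    exact ⟨cfNum α (n + 1) * cfDen α m - cfNum α m * cfDen α (n + 1), by ring⟩
  obtain h | h := Int.isUnit_iff.mp (isUnit_of_dvd_unit hdvd (isUnit_neg_one.pow n)) <;> omega

end ContinuedFraction

section ApproximationError

variable {α : ℝ}

noncomputable def cfErr (α : ℝ) (n : ℕ) : ℝ := cfDen α n * α - cfNum α n

theorem cfErr_add_two (n : ℕ) :
    cfErr α (n + 2) = cfDigit α (n + 2) * cfErr α (n + 1) + cfErr α n := by
  simp only [cfErr, cfDen_add_two, cfNum_add_two]
  push_cast
  ring

theorem cfErr_succ_mul_cfTail (hα : Irrational α) :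
    ∀ n, cfErr α (n + 1) * cfTail α (n + 2) = -cfErr α n
  | 0 => by
    have h0 : α = cfDigit α 0 + (cfTail α 1)⁻¹ := cfTail_eq_cfDigit_add_inv 0
    have h1 : cfTail α 1 = cfDigit α 1 + (cfTail α 2)⁻¹ := cfTail_eq_cfDigit_add_inv 1
    have hx1 := mul_inv_cancel₀ (zero_lt_one.trans (one_lt_cfTail_succ hα 0)).ne'
    have hx2 := mul_inv_cancel₀ (zero_lt_one.trans (one_lt_cfTail_succ hα 1)).ne'
    simp only [cfErr, cfNum, cfDen, zero_add]
    push_cast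
    linear_combination (cfDigit α 1 * cfTail α 2 + 1) * h0 - (cfTail α 1)⁻¹ * cfTail α 2 * h1
      + cfTail α 2 * hx1 - (cfTail α 1)⁻¹ * hx2
  | n + 1 => by
    have ih := cfErr_succ_mul_cfTail hα n
    rw [cfTail_eq_cfDigit_add_inv (n + 2)] at ih
    have hx : cfTail α (n + 3) ≠ 0 := (zero_lt_one.trans (one_lt_cfTail_succ hα (n + 2))).ne'
    rw [cfErr_add_two]
    linear_combination cfTail α (n + 3) * ih - cfErr α (n + 1) * mul_inv_cancel₀ hx

theorem abs_cfErr_mul (hα : Irrational α) (n : ℕ) :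
    |cfErr α n| * (cfDen α (n + 1) + cfDen α n / cfTail α (n + 2)) = 1 := by
  have hx : 0 < cfTail α (n + 2) := zero_lt_one.trans (one_lt_cfTail_succ hα (n + 1))
  have hdet : (cfNum α (n + 1) * cfDen α n - cfNum α n * cfDen α (n + 1) : ℝ) = (-1) ^ n := by
    exact_mod_cast cfNum_succ_mul_cfDen_sub n
  have hsigned : cfErr α n * (cfDen α (n + 1) + cfDen α n / cfTail α (n + 2)) = (-1) ^ n := by
    have hdet' : cfErr α n * cfDen α (n + 1) - cfErr α (n + 1) * cfDen α n = (-1) ^ n := by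
      simp only [cfErr]
      linear_combination hdet
    linear_combination hdet' + cfDen α n * (cfTail α (n + 2))⁻¹ * cfErr_succ_mul_cfTail hα n
      - cfErr α (n + 1) * cfDen α n * mul_inv_cancel₀ hx.ne'
  have hpos : 0 < (cfDen α (n + 1) + cfDen α n / cfTail α (n + 2) : ℝ) := by
    have : (1 : ℝ) ≤ cfDen α (n + 1) := by exact_mod_cast one_le_cfDen hα (n + 1)
    have : (0 : ℝ) ≤ cfDen α n / cfTail α (n + 2) :=
      div_nonneg (by exact_mod_cast (zero_le_one.trans (one_le_cfDen hα n))) hx.le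
    linarith
  rw [← abs_of_pos hpos, ← abs_mul, hsigned, abs_pow, abs_neg, abs_one, one_pow]

theorem abs_cfErr_le (hα : Irrational α) (n : ℕ) : |cfErr α n| ≤ (cfDen α (n + 1) : ℝ)⁻¹ := by
  have hx : 0 < cfTail α (n + 2) := zero_lt_one.trans (one_lt_cfTail_succ hα (n + 1))
  have hq : (0 : ℝ) < cfDen α (n + 1) := by exact_mod_cast one_le_cfDen hα (n + 1)
  have hq' : (0 : ℝ) ≤ cfDen α n / cfTail α (n + 2) :=
    div_nonneg (by exact_mod_cast zero_le_one.trans (one_le_cfDen hα n)) hx.le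
  rw [eq_inv_of_mul_eq_one_left (abs_cfErr_mul hα n)]
  exact inv_anti₀ hq (le_add_of_nonneg_right hq')

end ApproximationError

section GoodApproximations

variable {α : ℝ}

theorem six_mul_cfDen_le (hα : Irrational α) {n : ℕ} (h : cfDigit α (n + 2) ≤ 4) :
    6 * cfDen α (n + 2) ≤ 5 * cfDen α (n + 3) := by
  have := one_le_cfDen hα (n + 1)
  have := one_le_cfDen hα (n + 2)
  have : cfDen α n ≤ cfDen α (n + 1) := cfDen_le_succ hα n
  have : 1 ≤ cfDigit α (n + 3) := one_le_cfDigit_succ hα (n + 2)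
  have hq2 := cfDen_add_two (α := α) n
  have hq3 : cfDen α (n + 3) = cfDigit α (n + 3) * cfDen α (n + 2) + cfDen α (n + 1) :=
    cfDen_add_two (n + 1)
  nlinarith

theorem inv_cfTail_succ_le (hα : Irrational α) {n k : ℕ} (h : cfDigit α (n + 2) ≤ k) :
    (cfTail α (n + 1))⁻¹ ≤ (k + 1) / (k + 2) := by
  have hx : cfTail α (n + 1) = cfDigit α (n + 1) + (cfTail α (n + 2))⁻¹ :=
    cfTail_eq_cfDigit_add_inv (n + 1)
  have ha : (1 : ℝ) ≤ cfDigit α (n + 1) := by exact_mod_cast one_le_cfDigit_succ hα n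
  have hk : (cfDigit α (n + 2) : ℝ) ≤ k := by exact_mod_cast h
  have hlt : cfTail α (n + 2) < k + 1 := (cfTail_lt_cfDigit_add_one _).trans_le (by linarith)
  have hpos : 0 < cfTail α (n + 2) := zero_lt_one.trans (one_lt_cfTail_succ hα (n + 1))
  have hge : 1 + ((k : ℝ) + 1)⁻¹ ≤ cfTail α (n + 1) := by
    rw [hx]
    linarith [inv_anti₀ hpos hlt.le]
  calc (cfTail α (n + 1))⁻¹ ≤ (1 + ((k : ℝ) + 1)⁻¹)⁻¹ := inv_anti₀ (by positivity) hge
    _ = (k + 1) / (k + 2) := by field_simp; ring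

theorem not_isConvergent_mediant (hα : Irrational α) {n : ℕ} (h2 : 2 ≤ cfDigit α (n + 2)) :
    ¬ IsConvergent α (cfNum α (n + 1) + cfNum α n) (cfDen α (n + 1) + cfDen α n) := by
  have := one_le_cfDen hα n
  have := one_le_cfDen hα (n + 1)
  refine not_isConvergent_of_cfDen_lt_of_lt_cfDen hα (n := n + 1) (by omega) ?_
  rw [cfDen_add_two]
  nlinarith

/-- `99/109` is the value of the bound at `ρ = 5/6`, `v = 4/5`, where `hρv` is an equality. -/
theorem mediant_quality_le (hα : Irrational α) {n : ℕ} (h2 : cfDigit α (n + 2) = 2) {ρ v : ℝ}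
    (hρ : (cfDen α n : ℝ) ≤ ρ * cfDen α (n + 1)) (hv : (cfTail α (n + 3))⁻¹ ≤ v)
    (hρv : 10 * ρ + 10 * v + 109 * ρ * v ≤ 89) :
    ((cfDen α (n + 1) + cfDen α n : ℤ) : ℝ) * |((cfDen α (n + 1) + cfDen α n : ℤ) : ℝ) * α
      - ((cfNum α (n + 1) + cfNum α n : ℤ) : ℝ)| ≤ 99 / 109 := by
  have hQ : (1 : ℝ) ≤ cfDen α (n + 1) := by exact_mod_cast one_le_cfDen hα (n + 1)
  have hR : (1 : ℝ) ≤ cfDen α n := by exact_mod_cast one_le_cfDen hα n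
  have hu : 0 ≤ (cfTail α (n + 3))⁻¹ :=
    inv_nonneg.mpr (zero_lt_one.trans (one_lt_cfTail_succ hα (n + 2))).le
  have hE : |cfErr α (n + 1)| * (cfDen α (n + 2) + cfDen α (n + 1) / cfTail α (n + 3)) = 1 :=
    abs_cfErr_mul hα (n + 1)
  rw [cfDen_add_two, h2, div_eq_mul_inv] at hE
  push_cast at hE ⊢
  have herr : |(cfDen α (n + 1) + cfDen α n : ℝ) * α - (cfNum α (n + 1) + cfNum α n)|
      = |cfErr α (n + 1)| * (1 + (cfTail α (n + 3))⁻¹) := by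
    have hx : cfTail α (n + 2) = 2 + (cfTail α (n + 3))⁻¹ := by
      rw [cfTail_eq_cfDigit_add_inv (n + 2), h2]
      norm_num
    have hsum : (cfDen α (n + 1) + cfDen α n : ℝ) * α - (cfNum α (n + 1) + cfNum α n)
        = cfErr α (n + 1) + cfErr α n := by
      simp only [cfErr]
      ring
    rw [hsum, show cfErr α (n + 1) + cfErr α n = -(cfErr α (n + 1) * (1 + (cfTail α (n + 3))⁻¹))
      by linear_combination cfErr_succ_mul_cfTail hα n - cfErr α (n + 1) * hx]
    rw [abs_neg, abs_mul, abs_of_nonneg (by linarith : (0 : ℝ) ≤ 1 + (cfTail α (n + 3))⁻¹)]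
  have hmain : (cfDen α (n + 1) + cfDen α n : ℝ) * (1 + (cfTail α (n + 3))⁻¹)
      ≤ 99 / 109 * (2 * cfDen α (n + 1) + cfDen α n
        + cfDen α (n + 1) * (cfTail α (n + 3))⁻¹) := by
    nlinarith [mul_nonneg (sub_nonneg.mpr hρ) hu, mul_le_mul_of_nonneg_left hv
      (by linarith : (0 : ℝ) ≤ ρ * cfDen α (n + 1)), mul_le_mul_of_nonneg_left hv
      (by linarith : (0 : ℝ) ≤ cfDen α (n + 1)), mul_le_mul_of_nonneg_left hρv
      (by linarith : (0 : ℝ) ≤ cfDen α (n + 1))]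
  rw [herr]
  calc _ = (cfDen α (n + 1) + cfDen α n : ℝ) * (1 + (cfTail α (n + 3))⁻¹)
        * |cfErr α (n + 1)| := by ring
    _ ≤ 99 / 109 * (2 * cfDen α (n + 1) + cfDen α n
        + cfDen α (n + 1) * (cfTail α (n + 3))⁻¹) * |cfErr α (n + 1)| := by gcongr
    _ = 99 / 109 := by linear_combination (99 / 109 : ℝ) * hE

theorem two_mul_convergent_quality_le (hα : Irrational α) {n : ℕ} (h4 : cfDigit α (n + 2) = 4)
    (hq : cfDen α (n + 1) ≤ 2 * cfDen α n) :
    ((2 * cfDen α (n + 1) : ℤ) : ℝ) * |((2 * cfDen α (n + 1) : ℤ) : ℝ) * α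
      - ((2 * cfNum α (n + 1) : ℤ) : ℝ)| ≤ 8 / 9 := by
  have hQ : (1 : ℝ) ≤ cfDen α (n + 1) := by exact_mod_cast one_le_cfDen hα (n + 1)
  have hq' : (cfDen α (n + 1) : ℝ) ≤ 2 * cfDen α n := by exact_mod_cast hq
  have hnext : (cfDen α (n + 2) : ℝ) = 4 * cfDen α (n + 1) + cfDen α n := by
    rw [cfDen_add_two, h4]
    push_cast
    ring
  have hE := abs_cfErr_le hα (n + 1)
  rw [hnext] at hE
  have hval : ((2 * cfDen α (n + 1) : ℤ) : ℝ) * |((2 * cfDen α (n + 1) : ℤ) : ℝ) * α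
      - ((2 * cfNum α (n + 1) : ℤ) : ℝ)| = 4 * cfDen α (n + 1) * |cfErr α (n + 1)| := by
    push_cast
    rw [show 2 * (cfDen α (n + 1) : ℝ) * α - 2 * cfNum α (n + 1) = 2 * cfErr α (n + 1) by
      rw [cfErr]; ring, abs_mul, abs_two]
    ring
  rw [hval]
  calc 4 * (cfDen α (n + 1) : ℝ) * |cfErr α (n + 1)|
      ≤ 4 * cfDen α (n + 1) * (4 * (cfDen α (n + 1) : ℝ) + cfDen α n)⁻¹ := by gcongr
    _ ≤ 8 / 9 := by
      rw [← div_eq_mul_inv, div_le_div_iff₀ (by linarith) (by norm_num)]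
      linarith

theorem exists_not_isConvergent_quality_le (hα : Irrational α) {n : ℕ}
    (h2 : cfDigit α (n + 2) ≤ 4) (h4 : cfDigit α (n + 4) = 2) (h6 : cfDigit α (n + 6) ≤ 4) :
    ∃ p q : ℤ, (n : ℤ) ≤ q ∧ ¬ IsConvergent α p q ∧ (q : ℝ) * |q * α - p| ≤ 99 / 109 := by
  have hρ : (cfDen α (n + 2) : ℝ) ≤ 5 / 6 * cfDen α (n + 3) := by
    have := six_mul_cfDen_le hα h2
    have : (6 * cfDen α (n + 2) : ℝ) ≤ 5 * cfDen α (n + 3) := by exact_mod_cast this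
    linarith
  have mediant (v : ℝ) (hv : (cfTail α (n + 5))⁻¹ ≤ v)
      (hρv : 10 * (5 / 6) + 10 * v + 109 * (5 / 6) * v ≤ 89) :
      ∃ p q : ℤ, (n : ℤ) ≤ q ∧ ¬ IsConvergent α p q ∧ (q : ℝ) * |q * α - p| ≤ 99 / 109 :=
    ⟨cfNum α (n + 3) + cfNum α (n + 2), cfDen α (n + 3) + cfDen α (n + 2),
      by have := le_cfDen hα (n + 3); have := one_le_cfDen hα (n + 2); omega,
      not_isConvergent_mediant hα (n := n + 2) h4.ge, mediant_quality_le hα h4 hρ hv hρv⟩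
  rcases h6.lt_or_eq with h6 | h6
  · have h6' : cfDigit α (n + 6) ≤ ((3 : ℕ) : ℤ) := by push_cast; omega
    have hv : (cfTail α (n + 5))⁻¹ ≤ ((3 : ℕ) + 1) / ((3 : ℕ) + 2) :=
      inv_cfTail_succ_le hα (n := n + 4) h6'
    exact mediant (4 / 5) (hv.trans_eq (by norm_num)) (by norm_num)
  rcases lt_or_ge 1 (cfDigit α (n + 5)) with h5 | h5
  · refine mediant (1 / 2) ?_ (by norm_num)
    have : (2 : ℝ) ≤ cfTail α (n + 5) :=
      le_trans (by exact_mod_cast h5) (cfDigit_le_cfTail (n + 5))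
    rw [inv_le_comm₀ (by linarith) (by norm_num)]
    linarith
  have hq : cfDen α (n + 5) ≤ 2 * cfDen α (n + 4) := by
    have := cfDen_le_succ hα (n + 3)
    have := one_le_cfDen hα (n + 4)
    have := cfDen_add_two (α := α) (n + 3)
    nlinarith
  exact ⟨2 * cfNum α (n + 5), 2 * cfDen α (n + 5),
    by have := le_cfDen hα (n + 5); omega,
    not_isConvergent_mul (n + 5) one_lt_two,
    (two_mul_convergent_quality_le hα (n := n + 4) h6 hq).trans (by norm_num)⟩

end GoodApproximations

theorem psi2_nonneg (α t : ℝ) : 0 ≤ psi2 α t :=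
  Real.sInf_nonneg (by rintro _ ⟨_, _, -, -, -, rfl⟩; exact abs_nonneg _)

theorem psi2_le {α t : ℝ} {p q : ℤ} (hq : 1 ≤ q) (hqt : (q : ℝ) ≤ t)
    (hpq : ¬ IsConvergent α p q) : psi2 α t ≤ |q * α - p| :=
  csInf_le ⟨0, by rintro _ ⟨_, _, -, -, -, rfl⟩; exact abs_nonneg _⟩
    ⟨p, q, hq, hqt, fun n h => hpq ⟨n, h⟩, rfl⟩

theorem kConst_le_of_forall_exists {α c : ℝ}
    (h : ∀ N : ℕ, ∃ p q : ℤ, (N : ℤ) ≤ q ∧ ¬ IsConvergent α p q ∧ (q : ℝ) * |q * α - p| ≤ c) :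
    kConst α ≤ c := by
  refine liminf_le_of_frequently_le (frequently_atTop.mpr fun b => ?_)
    ⟨0, eventually_map.mpr ((eventually_ge_atTop 0).mono fun t ht =>
      mul_nonneg ht (psi2_nonneg α t))⟩
  obtain ⟨p, q, hNq, hpq, hc⟩ := h (max ⌈b⌉₊ 1)
  have hq : 1 ≤ q := by omega
  refine ⟨q, (Nat.le_ceil b).trans ?_, ?_⟩
  · have : ((⌈b⌉₊ : ℕ) : ℤ) ≤ q := le_trans (by exact_mod_cast le_max_left _ _) hNq
    exact_mod_cast this
  · exact (mul_le_mul_of_nonneg_left (psi2_le hq le_rfl hpq) (by exact_mod_cast by omega)).trans hc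

theorem stmt_13_general (α : ℝ) (hα : Irrational α)
    (hbd : ∀ᶠ n in atTop, cfDigit α n ≤ 4)
    (h2 : ∃ᶠ n in atTop, cfDigit α n = 2) :
    kConst α ≤ Real.sqrt 2 - 1 / 2 := by
  obtain ⟨N, hN⟩ := eventually_atTop.mp hbd
  refine (kConst_le_of_forall_exists (c := 99 / 109) fun M => ?_).trans ?_
  · obtain ⟨m, hm, hm2⟩ := frequently_atTop.mp h2 (N + M + 4)
    obtain ⟨n, rfl⟩ : ∃ n, m = n + 4 := ⟨m - 4, by omega⟩
    obtain ⟨p, q, hq, hpq⟩ :=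
      exists_not_isConvergent_quality_le hα (hN _ (by omega)) hm2 (hN _ (by omega))
    exact ⟨p, q, by omega, hpq⟩
  · have : (307 / 218 : ℝ) ≤ Real.sqrt 2 := Real.le_sqrt_of_sq_le (by norm_num)
    linarith

/-- If `α` is irrational, equivalent neither to `(1+√5)/2` nor to `(1+√17)/2`,
`aₙ ≤ 4` for all sufficiently large `n` and `aₙ = 2` for infinitely many `n`,
then `𝔨(α) ≤ √2 − 1/2`. -/
theorem stmt_13 (α : ℝ) (hα : Irrational α)
    (h5 : ¬ CFEquiv α ((1 + Real.sqrt 5) / 2))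
    (h17 : ¬ CFEquiv α ((1 + Real.sqrt 17) / 2))
    (hbd : ∀ᶠ n in atTop, cfDigit α n ≤ 4)
    (h2 : ∃ᶠ n in atTop, cfDigit α n = 2) :
    kConst α ≤ Real.sqrt 2 - 1 / 2 :=
  stmt_13_general α hα hbd h2
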